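/- For all nonnegative integers n and m, the following identity holds in ℚ(q): Σ_{k=0}^{⌊n/4⌋} q^{C(n−4k,2)} · [m+1 choose n−4k]_q · [m+k choose m]_{q^4} = Σ_{k=0}^{⌊n/2⌋} (−1)^k · [m+n−2k choose m]_q · [m+k choose m]_{q^2}. -/

import Mathlib

/-- The Gaussian (q-)binomial coefficient `[a choose b]` with parameter `x`,
`∏_{j=1}^{b} (1 - x^{a-b+j})/(1 - x^j)`, an element of `ℚ(q)` when `x = q`;
it is zero when `b > a`. -/
noncomputable def qbinom (x : RatFunc ℚ) (a b : ℕ) : RatFunc ℚ :=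
  if b ≤ a then ∏ j ∈ Finset.range b, (1 - x ^ (a - b + j + 1)) / (1 - x ^ (j + 1)) else 0

/-- The indeterminate `q` of the field of rational functions `ℚ(q)`. -/
noncomputable def q : RatFunc ℚ := RatFunc.X

/-!
Both sides are coefficients of `X^n` in products of power series. The numbers `[m+k choose m]_x`
are the coefficients of `1 / ∏_{i ≤ m} (1 - x^i X)`, and by the q-binomial theorem
`∏_{i ≤ m} (1 + q^i X) = Σ_j q^{C(j,2)} [m+1 choose j]_q X^j`. Hence the left side is the
coefficient of `X^n` in `∏_{i ≤ m} (1 + q^i X) / (1 - q^{4i} X^4)` and the right side that of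
`∏_{i ≤ m} 1 / ((1 - q^i X) (1 + q^{2i} X^2))`; these agree since
`1 - t^4 = (1 - t)(1 + t)(1 + t^2)`.
-/

open Finset hiding mk
open PowerSeries

theorem RatFunc.not_isOfFinOrder_X {K : Type*} [CommRing K] [IsDomain K] :
    ¬IsOfFinOrder (X : RatFunc K) := by
  rw [isOfFinOrder_iff_pow_eq_one]
  rintro ⟨n, hn, h⟩
  exact transcendental_X (IsAlgebraic.of_pow hn (h ▸ isAlgebraic_one))

theorem one_sub_pow_ne_zero_of_not_isOfFinOrder {R : Type*} [Ring R] {x : R}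
    (hx : ¬IsOfFinOrder x) {n : ℕ} (hn : n ≠ 0) : 1 - x ^ n ≠ 0 :=
  sub_ne_zero.2 fun h => hx (isOfFinOrder_iff_pow_eq_one.2 ⟨n, Nat.pos_of_ne_zero hn, h.symm⟩)

def qFactorial {R : Type*} [CommRing R] (x : R) (n : ℕ) : R :=
  ∏ j ∈ range n, (1 - x ^ (j + 1))

section qFactorial

variable {R : Type*} [CommRing R] {x : R}

@[simp]
theorem qFactorial_zero : qFactorial x 0 = 1 := prod_range_zero _

theorem qFactorial_succ (n : ℕ) : qFactorial x (n + 1) = qFactorial x n * (1 - x ^ (n + 1)) :=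
  prod_range_succ _ _

theorem qFactorial_ne_zero [IsDomain R] (hx : ¬IsOfFinOrder x) (n : ℕ) : qFactorial x n ≠ 0 :=
  prod_ne_zero_iff.2 fun j _ => one_sub_pow_ne_zero_of_not_isOfFinOrder hx j.succ_ne_zero

end qFactorial

section qbinom

variable {x : RatFunc ℚ}

theorem qbinom_zero_right (x : RatFunc ℚ) (a : ℕ) : qbinom x a 0 = 1 := by
  simp [qbinom]

theorem qbinom_of_lt (x : RatFunc ℚ) {a b : ℕ} (h : a < b) : qbinom x a b = 0 :=
  if_neg h.not_ge

theorem qbinom_eq_div (hx : ¬IsOfFinOrder x) {a b : ℕ} (h : b ≤ a) :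
    qbinom x a b = qFactorial x a / (qFactorial x b * qFactorial x (a - b)) := by
  obtain ⟨c, rfl⟩ := Nat.exists_eq_add_of_le h
  have hsplit :
      qFactorial x (b + c) = qFactorial x c * ∏ j ∈ range b, (1 - x ^ (c + j + 1)) := by
    unfold qFactorial
    rw [add_comm, prod_range_add]
  rw [qbinom, if_pos h, prod_div_distrib, Nat.add_sub_cancel_left, hsplit, ← qFactorial]
  have := qFactorial_ne_zero hx b
  have := qFactorial_ne_zero hx c
  field_simp

theorem qbinom_self (hx : ¬IsOfFinOrder x) (a : ℕ) : qbinom x a a = 1 := by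
  rw [qbinom_eq_div hx le_rfl, Nat.sub_self, qFactorial_zero, mul_one,
    div_self (qFactorial_ne_zero hx a)]

theorem qbinom_succ_succ (hx : ¬IsOfFinOrder x) (a b : ℕ) :
    qbinom x (a + 1) (b + 1) = qbinom x a b + x ^ (b + 1) * qbinom x a (b + 1) := by
  rcases lt_trichotomy b a with h | rfl | h
  · obtain ⟨c, rfl⟩ := Nat.exists_eq_add_of_lt h
    rw [qbinom_eq_div hx (by omega), qbinom_eq_div hx (by omega), qbinom_eq_div hx (by omega),
      show b + c + 1 + 1 - (b + 1) = c + 1 by omega, show b + c + 1 - b = c + 1 by omega,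
      show b + c + 1 - (b + 1) = c by omega]
    simp only [qFactorial_succ]
    have := qFactorial_ne_zero hx b
    have := qFactorial_ne_zero hx c
    have := one_sub_pow_ne_zero_of_not_isOfFinOrder hx (b + 1).succ_ne_zero
    have := one_sub_pow_ne_zero_of_not_isOfFinOrder hx b.succ_ne_zero
    have := one_sub_pow_ne_zero_of_not_isOfFinOrder hx c.succ_ne_zero
    field_simp
    ring
  · rw [qbinom_self hx, qbinom_self hx, qbinom_of_lt x (Nat.lt_succ_self b), mul_zero, add_zero]
  · rw [qbinom_of_lt x h, qbinom_of_lt x (by omega), qbinom_of_lt x (by omega), mul_zero, add_zero]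

end qbinom

theorem PowerSeries.rescale_C {R : Type*} [CommSemiring R] (a c : R) : rescale a (C c) = C c := by
  ext n
  simp only [coeff_rescale, coeff_C]
  split_ifs with h <;> simp [h]

theorem coeff_succ_one_add_X_mul {R : Type*} [CommRing R] (f : R⟦X⟧) (n : ℕ) :
    coeff (n + 1) ((1 + X) * f) = coeff (n + 1) f + coeff n f := by
  rw [add_mul, one_mul, map_add, coeff_succ_X_mul]

theorem coeff_succ_one_sub_C_mul_X_mul {R : Type*} [CommRing R] (c : R) (f : R⟦X⟧) (n : ℕ) :
    coeff (n + 1) ((1 - C c * X) * f) = coeff (n + 1) f - c * coeff n f := by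
  rw [sub_mul, one_mul, map_sub, mul_assoc, coeff_C_mul, coeff_succ_X_mul]

noncomputable def qbinomSeries (x : RatFunc ℚ) (m : ℕ) : (RatFunc ℚ)⟦X⟧ :=
  mk fun k => qbinom x (m + k) m

section qbinomSeries

variable {x : RatFunc ℚ}

theorem qbinomSeries_zero (x : RatFunc ℚ) : qbinomSeries x 0 = mk 1 := by
  simp only [qbinomSeries, zero_add, qbinom_zero_right]
  rfl

theorem one_sub_mul_qbinomSeries_succ (hx : ¬IsOfFinOrder x) (m : ℕ) :
    (1 - C (x ^ (m + 1)) * X) * qbinomSeries x (m + 1) = qbinomSeries x m := by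
  ext (_ | k)
  · simp [qbinomSeries, qbinom_self hx]
  · rw [coeff_succ_one_sub_C_mul_X_mul]
    simp only [qbinomSeries, coeff_mk]
    rw [show m + 1 + (k + 1) = m + k + 1 + 1 by omega, show m + 1 + k = m + k + 1 by omega,
      qbinom_succ_succ hx, add_sub_cancel_right, ← add_assoc]

theorem prod_one_sub_mul_qbinomSeries (hx : ¬IsOfFinOrder x) (m : ℕ) :
    (∏ i ∈ range (m + 1), (1 - C (x ^ i) * X)) * qbinomSeries x m = 1 := by
  induction m with
  | zero =>
    rw [zero_add, prod_range_one, pow_zero, map_one, one_mul, qbinomSeries_zero, mul_comm,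
      mk_one_mul_one_sub_eq_one]
  | succ m ih => rw [prod_range_succ, mul_assoc, one_sub_mul_qbinomSeries_succ hx, ih]

theorem prod_one_sub_mul_expand_rescale_qbinomSeries (hx : ¬IsOfFinOrder x) (s : RatFunc ℚ)
    {d : ℕ} (hd : d ≠ 0) (m : ℕ) :
    (∏ i ∈ range (m + 1), (1 - C (s * x ^ i) * X ^ d)) *
      expand d hd (rescale s (qbinomSeries x m)) = 1 := by
  have := congrArg (fun f => expand d hd (rescale s f)) (prod_one_sub_mul_qbinomSeries hx m)
  simpa [map_prod, rescale_X, rescale_C, expand_C, mul_assoc, mul_left_comm, mul_comm] using this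

theorem prod_one_add_C_pow_mul_X (hx : ¬IsOfFinOrder x) (m : ℕ) :
    ∏ i ∈ range m, (1 + C (x ^ i) * X) = mk fun j => x ^ j.choose 2 * qbinom x m j := by
  induction m with
  | zero =>
    ext (_ | j)
    · simp [qbinom_zero_right]
    · simp [qbinom_of_lt x j.succ_pos]
  | succ m ih =>
    have hshift : ∏ i ∈ range m, (1 + C (x ^ (i + 1)) * X) =
        rescale x (∏ i ∈ range m, (1 + C (x ^ i) * X)) := by
      simp [map_prod, rescale_X, rescale_C, pow_succ, mul_assoc]
    rw [prod_range_succ', hshift, ih, rescale_mk, pow_zero, map_one, one_mul, mul_comm]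
    ext (_ | j)
    · simp [qbinom_zero_right]
    · rw [coeff_succ_one_add_X_mul, coeff_mk, coeff_mk, coeff_mk, qbinom_succ_succ hx,
        Nat.choose_succ_succ', Nat.choose_one_right]
      ring

theorem prod_one_add_mul_expand_qbinomSeries (hx : ¬IsOfFinOrder x) (m : ℕ) :
    (∏ i ∈ range (m + 1), (1 + C (x ^ i) * X)) *
        expand 4 four_ne_zero (qbinomSeries (x ^ 4) m) =
      qbinomSeries x m * expand 2 two_ne_zero (rescale (-1) (qbinomSeries (x ^ 2) m)) := by
  have hx₂ : ¬IsOfFinOrder (x ^ 2) := by simpa [isOfFinOrder_pow] using hx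
  have hx₄ : ¬IsOfFinOrder (x ^ 4) := by simpa [isOfFinOrder_pow] using hx
  have h₁ := prod_one_sub_mul_qbinomSeries hx m
  have h₂ := prod_one_sub_mul_expand_rescale_qbinomSeries hx₂ (-1) two_ne_zero m
  have h₄ := prod_one_sub_mul_expand_rescale_qbinomSeries hx₄ 1 four_ne_zero m
  simp only [rescale_one, one_mul, RingHom.id_apply] at h₄
  set A := ∏ i ∈ range (m + 1), (1 + C (x ^ i) * X)
  set P₁ := ∏ i ∈ range (m + 1), (1 - C (x ^ i) * X)
  set P₂ := ∏ i ∈ range (m + 1), (1 - C (-1 * (x ^ 2) ^ i) * X ^ 2)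
  set P₄ := ∏ i ∈ range (m + 1), (1 - C ((x ^ 4) ^ i) * X ^ 4)
  have hfactor : P₄ = P₁ * A * P₂ := by
    simp only [P₁, P₂, P₄, A, ← prod_mul_distrib]
    refine prod_congr rfl fun i _ => ?_
    simp only [map_pow, map_mul, map_neg, map_one]
    ring
  set α := expand 4 four_ne_zero (qbinomSeries (x ^ 4) m)
  set β := expand 2 two_ne_zero (rescale (-1) (qbinomSeries (x ^ 2) m))
  calc A * α = A * α * (P₁ * qbinomSeries x m) * (P₂ * β) := by
        rw [h₁, h₂, mul_one, mul_one]
    _ = qbinomSeries x m * β * (P₄ * α) := by rw [hfactor]; ring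
    _ = qbinomSeries x m * β := by rw [h₄, mul_one]

end qbinomSeries

theorem Finset.sum_range_succ_ite_dvd {M : Type*} [AddCommMonoid M] {d : ℕ} (hd : 0 < d)
    (n : ℕ) (F : ℕ → M) :
    ∑ j ∈ range (n + 1), (if d ∣ j then F j else 0) =
      ∑ k ∈ range (n / d + 1), F (d * k) := by
  have hfilter : (range (n + 1)).filter (d ∣ ·) = (range (n / d + 1)).image (d * ·) := by
    ext j
    simp only [mem_filter, mem_range, mem_image, Nat.lt_succ_iff, Nat.le_div_iff_mul_le hd]
    constructor
    · rintro ⟨hj, k, rfl⟩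
      exact ⟨k, by rwa [mul_comm], rfl⟩
    · rintro ⟨k, hk, rfl⟩
      exact ⟨by rwa [mul_comm], dvd_mul_right d k⟩
  rw [← sum_filter, hfilter, sum_image fun a _ b _ h => Nat.eq_of_mul_eq_mul_left hd h]

theorem PowerSeries.coeff_mul_expand {R : Type*} [CommRing R] (f g : R⟦X⟧) {d : ℕ}
    (hd : d ≠ 0) (n : ℕ) :
    coeff n (f * expand d hd g) = ∑ k ∈ range (n / d + 1), coeff (n - d * k) f * coeff k g := by
  rw [mul_comm, coeff_mul, Nat.sum_antidiagonal_eq_sum_range_succ_mk]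
  simp only [coeff_expand, ite_mul, zero_mul]
  rw [sum_range_succ_ite_dvd (Nat.pos_of_ne_zero hd) n]
  simp only [Nat.mul_div_cancel_left _ (Nat.pos_of_ne_zero hd), mul_comm]

theorem stmt_16 (n m : ℕ) :
    ∑ k ∈ Finset.range (n / 4 + 1),
      q ^ Nat.choose (n - 4 * k) 2 * qbinom q (m + 1) (n - 4 * k) * qbinom (q ^ 4) (m + k) m
    = ∑ k ∈ Finset.range (n / 2 + 1),
        (-1 : RatFunc ℚ) ^ k * qbinom q (m + n - 2 * k) m * qbinom (q ^ 2) (m + k) m := by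
  have hq : ¬IsOfFinOrder q := RatFunc.not_isOfFinOrder_X
  have key := prod_one_add_mul_expand_qbinomSeries hq m
  rw [prod_one_add_C_pow_mul_X hq] at key
  calc _ = coeff n ((mk fun j => q ^ j.choose 2 * qbinom q (m + 1) j) *
        expand 4 four_ne_zero (qbinomSeries (q ^ 4) m)) := by
        simp only [coeff_mul_expand, qbinomSeries, coeff_mk]
    _ = coeff n (qbinomSeries q m *
          expand 2 two_ne_zero (rescale (-1) (qbinomSeries (q ^ 2) m))) := by
        rw [key]
    _ = _ := by
      simp only [coeff_mul_expand, qbinomSeries, coeff_mk, coeff_rescale]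
      refine sum_congr rfl fun k hk => ?_
      rw [Nat.add_sub_assoc (by have := mem_range.1 hk; omega)]
      ring
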